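/- arXiv:2305.07858 — 2 statements merged into one kernel-verified Lean document; each statement's English description precedes it below -/
import Mathlib

section
/- Let z ≥ 4, n ≥ z+2, and let κ be a content with Σ_i κ_i = n. Then there exists an injection ι from 𝒴_{(2,z)}(κ) into 𝒴_{(3,z−1)}(κ) such that r(ι(y)) = r(y) for every y, and whose image is exactly 𝒴_{(3,z−1)}(κ) \ 𝒴_{(3,z−1)}(κ; β), where β is the word (1,2,3,1,2,…,z−1) (the concatenation of the increasing runs 1,2,3 and 1,2,…,z−1). -/
open scoped Classical

noncomputable section

/-- The list of lengths of the maximal strictly increasing runs of a word, in order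
(the run type `τ_y`); its length is the number of runs `r(y)`. -/
def runLengths : List ℕ → List ℕ
  | [] => []
  | [_] => [1]
  | a :: b :: l =>
    if a < b then
      match runLengths (b :: l) with
      | [] => [1]
      | c :: cs => (c + 1) :: cs
    else 1 :: runLengths (b :: l)

/-- `y` belongs to `𝒴(κ)`: the word `y` has content `κ` (the letter `i` occurs `κ i` times;
in particular all letters are positive when `κ 0 = 0`), is Yamanouchi (in every prefix, `i+1`
occurs at most as often as `i`, for every `i ≥ 1`), and every run of `y` except possibly the
last has length at least `2`. -/
def MemYam (κ : ℕ → ℕ) (y : List ℕ) : Prop :=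
  (∀ i, y.count i = κ i) ∧
  (∀ m i, 1 ≤ i → ((y.take m).count (i + 1) : ℕ) ≤ (y.take m).count i) ∧
  (∀ l ∈ (runLengths y).dropLast, 2 ≤ l)

/-- The set `𝒴_α(κ)` of words in `𝒴(κ)` whose run type has `α` as a prefix. -/
def yamRT (κ : ℕ → ℕ) (α : List ℕ) : Set (List ℕ) :=
  {y | MemYam κ y ∧ α <+: runLengths y}

/-- The set `𝒴(κ; β)` of words in `𝒴(κ)` having the word `β` as a prefix. -/
def yamPre (κ : ℕ → ℕ) (β : List ℕ) : Set (List ℕ) :=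
  {y | MemYam κ y ∧ β <+: y}

/-!
The Yamanouchi condition pins down the start of a word of `𝒴_{(k,m)}(κ)` (which has no letter
`0`): its first run is `1 … k`, and in its second run every letter other than `1` and `k + 1` needs
its predecessor in the same run, so that run is `1 … j, k+1 … k+m-j` for some `1 ≤ j ≤ k`.
The injection moves the letter `k + 1` from the second run to the end of the first. The new
prefix `1 … k+1 | 1 … j, k+2 … k+m-j` is a rearrangement of the old one, is itself Yamanouchi and
ends with the same letter, so membership in `𝒴`, the rest of the word and its later runs are
unaffected. Conversely a word of `𝒴_{(k+1,m-1)}(κ)` has such a prefix with `1 ≤ j ≤ k + 1`, and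
`j = k + 1` gives exactly the words starting with `β = 1 … k+1, 1 … m-1`. The theorem is the
case `k = 2`, `m = z`.
-/

open List

namespace List

theorem take_range' (s n m : ℕ) : (range' s n).take m = range' s (min m n) := by
  rcases le_total m n with h | h
  · rw [take_range'_of_length_ge h, min_eq_left h]
  · rw [take_range'_of_length_le h, min_eq_right h]

theorem count_range'_eq_ite (a s n : ℕ) :
    (range' s n).count a = if s ≤ a ∧ a < s + n then 1 else 0 := by
  rw [(nodup_range' 1).count]
  simp only [mem_range'_1]

theorem eq_range'_of_pred_mem {d : List ℕ} {a : ℕ} (hd : d.Pairwise (· < ·))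
    (ha : ∀ v ∈ d, a ≤ v) (hpred : ∀ v ∈ d, a < v → v - 1 ∈ d) : d = range' a d.length := by
  induction d generalizing a with
  | nil => rfl
  | cons b d ih =>
    have hbd : ∀ v ∈ d, b < v := (pairwise_cons.mp hd).1
    obtain rfl : b = a := by
      by_contra hne
      have hab : a < b := lt_of_le_of_ne (ha b mem_cons_self) (Ne.symm hne)
      rcases mem_cons.mp (hpred b mem_cons_self hab) with h | h
      · omega
      · exact absurd (hbd _ h) (by omega)
    rw [length_cons, range'_succ, ← ih (pairwise_cons.mp hd).2 hbd]
    intro v hv hlt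
    rcases mem_cons.mp (hpred v (mem_cons_of_mem _ hv) (by omega)) with h | h
    · omega
    · exact h

end List

/-- A new run of `l ++ t` begins where `t` begins. -/
def RunBreak (l t : List ℕ) : Prop :=
  ∀ x ∈ l.getLast?, ∀ u ∈ t.head?, u ≤ x

theorem runLengths_ne_nil {l : List ℕ} (hl : l ≠ []) : runLengths l ≠ [] := by
  match l with
  | [_] => simp [runLengths]
  | a :: b :: l =>
    rw [runLengths]
    split_ifs
    · split <;> simp
    · simp

theorem runLengths_cons_cons_of_lt {a b : ℕ} {l : List ℕ} (hab : a < b) :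
    runLengths (a :: b :: l) = (runLengths (b :: l)).modifyHead (· + 1) := by
  rw [runLengths, if_pos hab]
  split <;> simp_all [runLengths_ne_nil]

theorem runLengths_append {l t : List ℕ} (h : RunBreak l t) :
    runLengths (l ++ t) = runLengths l ++ runLengths t := by
  induction l with
  | nil => rfl
  | cons a l ih =>
    rcases l with _ | ⟨b, l⟩
    · rcases t with _ | ⟨u, t⟩
      · rfl
      · simp [runLengths, Nat.not_lt.mpr (h a rfl u rfl)]
    · have ih := ih fun x hx => h x (by simpa using hx)
      by_cases hab : a < b
      · obtain ⟨c, cs, hc⟩ := exists_cons_of_ne_nil (runLengths_ne_nil (cons_ne_nil b l))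
        rw [cons_append, cons_append, runLengths_cons_cons_of_lt hab,
          runLengths_cons_cons_of_lt hab, ← cons_append, ih, hc]
        rfl
      · rw [cons_append, cons_append, runLengths, if_neg hab, ← cons_append, ih, runLengths,
          if_neg hab, cons_append]

theorem runLengths_of_isChain {l : List ℕ} (hl : l.IsChain (· < ·)) (hne : l ≠ []) :
    runLengths l = [l.length] := by
  induction l with
  | nil => exact absurd rfl hne
  | cons a l ih =>
    rcases l with _ | ⟨b, l⟩
    · rfl
    · rw [runLengths_cons_cons_of_lt (isChain_cons_cons.mp hl).1,
        ih (isChain_cons_cons.mp hl).2 (cons_ne_nil _ _)]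
      rfl

theorem exists_eq_append_of_runLengths_eq_cons {y L : List ℕ} {k : ℕ}
    (h : runLengths y = k :: L) :
    ∃ c t, y = c ++ t ∧ c ≠ [] ∧ c.IsChain (· < ·) ∧ c.length = k ∧ runLengths t = L ∧
      RunBreak c t := by
  induction y generalizing k L with
  | nil => simp [runLengths] at h
  | cons a l ih =>
    rcases l with _ | ⟨b, l⟩
    · obtain ⟨rfl, rfl⟩ : 1 = k ∧ [] = L := by simpa [runLengths] using h
      exact ⟨[a], [], rfl, cons_ne_nil _ _, isChain_singleton _, rfl, rfl, by simp [RunBreak]⟩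
    by_cases hab : a < b
    · obtain ⟨c₀, cs, hc⟩ := exists_cons_of_ne_nil (runLengths_ne_nil (cons_ne_nil b l))
      obtain ⟨rfl, rfl⟩ : c₀ + 1 = k ∧ cs = L := by
        simpa [runLengths_cons_cons_of_lt hab, hc] using h
      obtain ⟨c, t, hct, hc_ne, hc_chain, hc_len, ht, hbreak⟩ := ih hc
      obtain ⟨b', c', rfl⟩ := exists_cons_of_ne_nil hc_ne
      obtain ⟨rfl, rfl⟩ : b = b' ∧ l = c' ++ t := by simpa using hct
      exact ⟨a :: b :: c', t, rfl, cons_ne_nil _ _, hc_chain.cons_cons hab, by simp [hc_len],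
        ht, fun x hx => hbreak x (by simpa [getLast?_cons_cons] using hx)⟩
    · obtain ⟨rfl, rfl⟩ : 1 = k ∧ runLengths (b :: l) = L := by
        simpa [runLengths, hab] using h
      exact ⟨[a], b :: l, rfl, cons_ne_nil _ _, isChain_singleton _, rfl, rfl,
        by simpa [RunBreak] using hab⟩

def Yamanouchi (y : List ℕ) : Prop :=
  ∀ m i, 1 ≤ i → (y.take m).count (i + 1) ≤ (y.take m).count i

namespace Yamanouchi

theorem count_le_of_prefix {y p : List ℕ} (hy : Yamanouchi y) (hp : p <+: y) {i : ℕ}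
    (hi : 1 ≤ i) : p.count (i + 1) ≤ p.count i := by
  rw [prefix_iff_eq_take.mp hp]
  exact hy _ i hi

theorem append_of_perm {u v t : List ℕ} (h : Yamanouchi (u ++ t)) (huv : u ~ v)
    (hv : Yamanouchi v) : Yamanouchi (v ++ t) := by
  intro m i hi
  rcases le_total m v.length with hm | hm
  · rw [take_append_of_le_length hm]
    exact hv m i hi
  · have hm' : u.length ≤ m := huv.length_eq ▸ hm
    have hcount : ∀ a, ((v ++ t).take m).count a = ((u ++ t).take m).count a := fun a => by
      rw [take_append, take_append, take_of_length_le hm, take_of_length_le hm', count_append,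
        count_append, huv.count_eq, huv.length_eq]
    rw [hcount, hcount]
    exact h m i hi

theorem count_lt_of_succ_mem {p c t : List ℕ} (hy : Yamanouchi (p ++ c ++ t))
    (hc : c.Pairwise (· < ·)) {i : ℕ} (hi : 1 ≤ i) (hmem : i + 1 ∈ c) :
    p.count (i + 1) < p.count i + c.count i := by
  obtain ⟨s, s', rfl⟩ := append_of_mem hmem
  have hs : s.count (i + 1) = 0 :=
    count_eq_zero.mpr fun hmem' => (pairwise_append.mp hc).2.2 _ hmem' _ mem_cons_self |>.false
  have hle := hy.count_le_of_prefix (p := p ++ s ++ [i + 1]) (by simp) hi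
  simp [hs] at hle ⊢
  omega

theorem eq_range'_of_append {c t : List ℕ} (hy : Yamanouchi (c ++ t))
    (hc : c.Pairwise (· < ·)) (h0 : 0 ∉ c) : c = range' 1 c.length := by
  refine eq_range'_of_pred_mem hc (fun v hv => Nat.pos_of_ne_zero (ne_of_mem_of_not_mem hv h0))
    fun v hv hlt => ?_
  have := (nil_append c ▸ hy).count_lt_of_succ_mem (p := []) hc (i := v - 1) (by omega)
    (by rwa [Nat.sub_add_cancel hlt.le])
  simpa using this

theorem exists_eq_range'_append_range' {k : ℕ} {c t : List ℕ}
    (hy : Yamanouchi (range' 1 k ++ c ++ t)) (hc : c.Pairwise (· < ·)) (h0 : 0 ∉ c)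
    (hne : c ≠ []) (hhead : ∀ u ∈ c.head?, u ≤ k) :
    ∃ j, 1 ≤ j ∧ j ≤ k ∧ j ≤ c.length ∧ c = range' 1 j ++ range' (k + 1) (c.length - j) := by
  -- `1 … k` contains `v` and `v - 1` equally often unless `v = k + 1`
  have hpred : ∀ v ∈ c, 2 ≤ v → v ≠ k + 1 → v - 1 ∈ c := fun v hv h2 hk => by
    have := hy.count_lt_of_succ_mem hc (i := v - 1) (by omega)
      (by rwa [Nat.sub_add_cancel (by omega : 1 ≤ v)])
    rw [Nat.sub_add_cancel (by omega : 1 ≤ v), count_range'_eq_ite, count_range'_eq_ite] at this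
    exact count_pos_iff.mp (by split_ifs at this <;> omega)
  set lo := c.filter (· ≤ k) with hlo
  set hi := c.filter (k < ·) with hhi
  have hlo_eq : lo = range' 1 lo.length := by
    refine eq_range'_of_pred_mem (hc.filter _) (fun v hv => ?_) fun v hv hlt => ?_
    · exact Nat.pos_of_ne_zero (ne_of_mem_of_not_mem (mem_of_mem_filter hv) h0)
    · simp only [hlo, mem_filter, decide_eq_true_eq] at hv ⊢
      exact ⟨hpred v hv.1 hlt (by omega), by omega⟩
  have hhi_eq : hi = range' (k + 1) hi.length := by
    refine eq_range'_of_pred_mem (hc.filter _) (fun v hv => ?_) fun v hv hlt => ?_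
    · simp only [hhi, mem_filter, decide_eq_true_eq] at hv
      omega
    · simp only [hhi, mem_filter, decide_eq_true_eq] at hv ⊢
      exact ⟨hpred v hv.1 (by omega) (by omega), by omega⟩
  have hc_eq : c = lo ++ hi := by
    refine hc.eq_of_mem_iff ?_ fun v => ?_
    · exact pairwise_append.mpr ⟨hc.filter _, hc.filter _, fun a ha b hb => by
        simp only [hlo, hhi, mem_filter, decide_eq_true_eq] at ha hb
        omega⟩
    · simp only [hlo, hhi, mem_append, mem_filter, decide_eq_true_eq, ← and_or_left]
      exact (and_iff_left (le_or_gt v k)).symm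
  have hlen : c.length = lo.length + hi.length := by rw [hc_eq, length_append]
  refine ⟨lo.length, ?_, ?_, by omega, ?_⟩
  · obtain ⟨u, c', rfl⟩ := exists_cons_of_ne_nil hne
    exact length_pos_of_mem (mem_filter.mpr ⟨mem_cons_self, by simpa using hhead u rfl⟩)
  · by_contra hk
    have hmem : k + 1 ∈ lo := by rw [hlo_eq, mem_range'_1]; omega
    simp [hlo] at hmem
  · rw [hlen, Nat.add_sub_cancel_left, ← hlo_eq, ← hhi_eq, ← hc_eq]

end Yamanouchi

def runPrefix (k j l : ℕ) : List ℕ :=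
  range' 1 k ++ (range' 1 j ++ range' (k + 1) l)

@[simp] theorem length_runPrefix (k j l : ℕ) : (runPrefix k j l).length = k + (j + l) := by
  simp [runPrefix]

theorem count_runPrefix (a k j l : ℕ) :
    (runPrefix k j l).count a = (if 1 ≤ a ∧ a < 1 + k then 1 else 0) +
      ((if 1 ≤ a ∧ a < 1 + j then 1 else 0) + if k + 1 ≤ a ∧ a < k + 1 + l then 1 else 0) := by
  simp only [runPrefix, count_append, count_range'_eq_ite]

theorem runLengths_runPrefix {k j : ℕ} (l : ℕ) (hj : 1 ≤ j) (hjk : j ≤ k) :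
    runLengths (runPrefix k j l) = [k, j + l] := by
  have hne : range' 1 j ++ range' (k + 1) l ≠ [] := by simp; omega
  rw [runPrefix, runLengths_append, runLengths_of_isChain, runLengths_of_isChain _ hne]
  · simp
  · exact isChain_iff_pairwise.mpr (pairwise_append.mpr ⟨pairwise_lt_range', pairwise_lt_range',
      by simp only [mem_range'_1]; omega⟩)
  · exact isChain_iff_pairwise.mpr pairwise_lt_range'
  · simp; omega
  · obtain ⟨j, rfl⟩ := Nat.exists_eq_add_of_le' hj
    simp [RunBreak, getLast?_range', range'_succ]
    omega

theorem getLast?_runPrefix (k j : ℕ) {l : ℕ} (hl : 1 ≤ l) :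
    (runPrefix k j l).getLast? = some (k + l) := by
  rw [runPrefix, getLast?_append_of_ne_nil _ (by simp; omega),
    getLast?_append_of_ne_nil _ (by simp; omega), getLast?_range']
  simp; omega

theorem runBreak_runPrefix_iff {k j m : ℕ} {t : List ℕ} (hjm : j + 2 ≤ m) :
    RunBreak (runPrefix k j (m - j)) t ↔ RunBreak (runPrefix (k + 1) j (m - 1 - j)) t := by
  rw [RunBreak, RunBreak, getLast?_runPrefix _ _ (by omega), getLast?_runPrefix _ _ (by omega),
    show k + 1 + (m - 1 - j) = k + (m - j) by omega]

theorem runPrefix_succ_perm (k j l : ℕ) : runPrefix k j (l + 1) ~ runPrefix (k + 1) j l := by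
  have h₁ : range' (k + 1) (l + 1) = (k + 1) :: range' (k + 1 + 1) l := range'_succ
  have h₂ : range' 1 (k + 1) = range' 1 k ++ [k + 1] := by simp [range'_concat, add_comm]
  rw [runPrefix, runPrefix, h₁, h₂, append_assoc, singleton_append]
  exact perm_middle.append_left _

theorem yamanouchi_runPrefix {k j : ℕ} (l : ℕ) (hjk : j ≤ k) : Yamanouchi (runPrefix k j l) := by
  intro m i hi
  simp only [runPrefix, take_append, take_range', count_append, count_range'_eq_ite,
    length_range']
  split_ifs <;> omega

theorem runPrefix_left_injective {k j j' l l' : ℕ} (hj : j ≤ k) (hj' : j' ≤ k)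
    (h : runPrefix k j l = runPrefix k j' l') : j = j' := by
  have h₁ := congrArg (count j) h
  have h₂ := congrArg (count j') h
  simp only [count_runPrefix] at h₁ h₂
  split_ifs at h₁ h₂ <;> omega

theorem exists_eq_runPrefix_append {y : List ℕ} {k m : ℕ} (h0 : 0 ∉ y) (hy : Yamanouchi y)
    (hrt : [k, m] <+: runLengths y) :
    ∃ j t, 1 ≤ j ∧ j ≤ k ∧ j ≤ m ∧ y = runPrefix k j (m - j) ++ t ∧
      RunBreak (runPrefix k j (m - j)) t := by
  obtain ⟨r, hr⟩ := hrt
  obtain ⟨c₁, t₁, rfl, hc₁_ne, hc₁, hlen₁, hr₁, hbreak₁⟩ :=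
    exists_eq_append_of_runLengths_eq_cons hr.symm
  obtain ⟨c₂, t, rfl, hc₂_ne, hc₂, hlen₂, -, hbreak₂⟩ := exists_eq_append_of_runLengths_eq_cons hr₁
  obtain rfl : c₁ = range' 1 k :=
    hlen₁ ▸ hy.eq_range'_of_append (isChain_iff_pairwise.mp hc₁) fun h => h0 (mem_append_left _ h)
  have hk : 1 ≤ k := Nat.one_le_iff_ne_zero.mpr (by simpa using hc₁_ne)
  have hhead : ∀ u ∈ c₂.head?, u ≤ k := fun u hu =>
    hbreak₁ k (by simp [getLast?_range']; omega) u (by simp [head?_append, Option.mem_def.mp hu])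
  obtain ⟨j, hj, hjk, hjm, hc₂_eq⟩ := Yamanouchi.exists_eq_range'_append_range'
    (by rwa [← append_assoc] at hy) (isChain_iff_pairwise.mp hc₂)
    (fun h => h0 (mem_append_right _ (mem_append_left _ h))) hc₂_ne hhead
  rw [hlen₂] at hc₂_eq hjm
  subst hc₂_eq
  refine ⟨j, t, hj, hjk, hjm, by simp only [runPrefix, append_assoc], ?_⟩
  rwa [RunBreak, runPrefix, getLast?_append_of_ne_nil _ hc₂_ne]

theorem MemYam.zero_notMem {κ : ℕ → ℕ} {y : List ℕ} (h : MemYam κ y) (hκ0 : κ 0 = 0) : 0 ∉ y :=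
  count_eq_zero.mp ((h.1 0).trans hκ0)

theorem MemYam.append_of_perm {κ : ℕ → ℕ} {u v t : List ℕ} (h : MemYam κ (u ++ t)) (huv : u ~ v)
    (hv : Yamanouchi v) (hlast : u.getLast? = v.getLast?) (hbreak : RunBreak u t)
    (hruns : ∀ x ∈ runLengths v, 2 ≤ x) : MemYam κ (v ++ t) := by
  obtain ⟨hcount, hyam, hruns_ut⟩ := h
  refine ⟨fun i => by rw [count_append, ← huv.count_eq, ← count_append, hcount],
    Yamanouchi.append_of_perm hyam huv hv, fun x hx => ?_⟩
  have hbreak' : RunBreak v t := by rwa [RunBreak, ← hlast]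
  rw [runLengths_append hbreak', dropLast_append] at hx
  rw [runLengths_append hbreak, dropLast_append] at hruns_ut
  split_ifs at hx hruns_ut
  · exact hruns x (dropLast_subset _ hx)
  · rcases mem_append.mp hx with hx | hx
    · exact hruns x hx
    · exact hruns_ut x (mem_append_right _ hx)

def moveToFirstRun (k : ℕ) (y : List ℕ) : List ℕ :=
  range' 1 (k + 1) ++ (y.drop k).erase (k + 1)

section MoveToFirstRun

variable {κ : ℕ → ℕ} {k m : ℕ}

theorem exists_eq_runPrefix_append_of_mem_yamRT {y : List ℕ} (hκ0 : κ 0 = 0)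
    (hy : y ∈ yamRT κ [k, m]) :
    ∃ j t, 1 ≤ j ∧ j ≤ k ∧ j ≤ m ∧ y = runPrefix k j (m - j) ++ t ∧
      RunBreak (runPrefix k j (m - j)) t :=
  exists_eq_runPrefix_append (hy.1.zero_notMem hκ0) hy.1.2.1 hy.2

theorem runPrefix_append_mem_yamRT_iff {j : ℕ} {t : List ℕ} (hk : 2 ≤ k) (hm : k + 2 ≤ m)
    (hj : 1 ≤ j) (hjk : j ≤ k) (ht : RunBreak (runPrefix k j (m - j)) t) :
    runPrefix k j (m - j) ++ t ∈ yamRT κ [k, m] ↔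
      runPrefix (k + 1) j (m - 1 - j) ++ t ∈ yamRT κ [k + 1, m - 1] := by
  have ht' := (runBreak_runPrefix_iff (by omega)).mp ht
  have hperm : runPrefix k j (m - j) ~ runPrefix (k + 1) j (m - 1 - j) := by
    rw [show m - j = m - 1 - j + 1 by omega]
    exact runPrefix_succ_perm k j _
  have hlast : (runPrefix k j (m - j)).getLast? = (runPrefix (k + 1) j (m - 1 - j)).getLast? := by
    rw [getLast?_runPrefix _ _ (by omega), getLast?_runPrefix _ _ (by omega)]
    congr 1
    omega
  have hruns : runLengths (runPrefix k j (m - j)) = [k, m] := by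
    rw [runLengths_runPrefix _ hj hjk, Nat.add_sub_cancel' (by omega)]
  have hruns' : runLengths (runPrefix (k + 1) j (m - 1 - j)) = [k + 1, m - 1] := by
    rw [runLengths_runPrefix _ hj (by omega), Nat.add_sub_cancel' (by omega)]
  simp only [yamRT, Set.mem_ofPred_eq, runLengths_append ht, runLengths_append ht', hruns,
    hruns', prefix_append, and_true]
  constructor
  · intro h
    exact h.append_of_perm hperm (yamanouchi_runPrefix _ (by omega)) hlast ht
      (by simp [hruns']; omega)
  · intro h
    exact h.append_of_perm hperm.symm (yamanouchi_runPrefix _ hjk) hlast.symm ht'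
      (by simp [hruns]; omega)

theorem moveToFirstRun_runPrefix_append {j : ℕ} (t : List ℕ) (hjk : j ≤ k) (hjm : j < m) :
    moveToFirstRun k (runPrefix k j (m - j) ++ t) = runPrefix (k + 1) j (m - 1 - j) ++ t := by
  have hk₁ : k + 1 ∉ range' 1 j := by simp only [mem_range'_1]; omega
  rw [moveToFirstRun, runPrefix, append_assoc, drop_left' length_range', append_assoc,
    erase_append_right _ hk₁, show m - j = m - 1 - j + 1 by omega, range'_succ (s := k + 1),
    cons_append, erase_cons_head, runPrefix]
  simp only [append_assoc]

theorem injOn_moveToFirstRun (hκ0 : κ 0 = 0) (hm : k + 2 ≤ m) :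
    Set.InjOn (moveToFirstRun k) (yamRT κ [k, m]) := by
  intro y₁ hy₁ y₂ hy₂ h
  obtain ⟨j₁, t₁, -, hjk₁, -, rfl, -⟩ := exists_eq_runPrefix_append_of_mem_yamRT hκ0 hy₁
  obtain ⟨j₂, t₂, -, hjk₂, -, rfl, -⟩ := exists_eq_runPrefix_append_of_mem_yamRT hκ0 hy₂
  rw [moveToFirstRun_runPrefix_append _ hjk₁ (by omega),
    moveToFirstRun_runPrefix_append _ hjk₂ (by omega)] at h
  obtain ⟨hpre, rfl⟩ := append_inj h (by simp; omega)
  obtain rfl := runPrefix_left_injective (by omega) (by omega) hpre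
  rfl

theorem length_runLengths_moveToFirstRun (hκ0 : κ 0 = 0) (hm : k + 2 ≤ m) {y : List ℕ}
    (hy : y ∈ yamRT κ [k, m]) :
    (runLengths (moveToFirstRun k y)).length = (runLengths y).length := by
  obtain ⟨j, t, hj, hjk, -, rfl, ht⟩ := exists_eq_runPrefix_append_of_mem_yamRT hκ0 hy
  rw [moveToFirstRun_runPrefix_append _ hjk (by omega),
    runLengths_append ((runBreak_runPrefix_iff (by omega)).mp ht), runLengths_append ht,
    runLengths_runPrefix _ hj (by omega), runLengths_runPrefix _ hj hjk]
  simp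

theorem image_moveToFirstRun (hκ0 : κ 0 = 0) (hk : 2 ≤ k) (hm : k + 2 ≤ m) :
    moveToFirstRun k '' yamRT κ [k, m] =
      yamRT κ [k + 1, m - 1] \ yamPre κ (range' 1 (k + 1) ++ range' 1 (m - 1)) := by
  have hβ : range' 1 (k + 1) ++ range' 1 (m - 1) =
      runPrefix (k + 1) (k + 1) (m - 1 - (k + 1)) := by
    rw [runPrefix, show k + 1 + 1 = 1 + (k + 1) by omega, range'_append_1,
      Nat.add_sub_cancel' (by omega)]
  rw [hβ]
  ext w
  constructor
  · rintro ⟨y, hy, rfl⟩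
    obtain ⟨j, t, hj, hjk, -, rfl, ht⟩ := exists_eq_runPrefix_append_of_mem_yamRT hκ0 hy
    rw [moveToFirstRun_runPrefix_append _ hjk (by omega)]
    refine ⟨(runPrefix_append_mem_yamRT_iff hk hm hj hjk ht).mp hy, fun hβ_pre => ?_⟩
    have hβ_eq := (prefix_of_prefix_length_le hβ_pre.2 (prefix_append _ _)
      (by simp; omega)).eq_of_length (by simp; omega)
    exact absurd (runPrefix_left_injective le_rfl (by omega) hβ_eq) (by omega)
  · rintro ⟨hw, hw_β⟩
    obtain ⟨j, t, hj, hjk, -, rfl, ht⟩ := exists_eq_runPrefix_append_of_mem_yamRT hκ0 hw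
    have hjk' : j ≤ k := by
      by_contra hjk'
      obtain rfl : j = k + 1 := by omega
      exact hw_β ⟨hw.1, prefix_append _ _⟩
    refine ⟨runPrefix k j (m - j) ++ t, ?_, moveToFirstRun_runPrefix_append _ hjk' (by omega)⟩
    exact (runPrefix_append_mem_yamRT_iff hk hm hj hjk'
      ((runBreak_runPrefix_iff (by omega)).mpr ht)).mpr hw

end MoveToFirstRun

theorem exists_injection_yam_2z_3zsub1_general (z : ℕ) (κ : ℕ →₀ ℕ) (hz : 4 ≤ z)
    (hκ0 : κ 0 = 0) :
    ∃ ι : List ℕ → List ℕ,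
      Set.InjOn ι (yamRT κ [2, z]) ∧
      (∀ y ∈ yamRT κ [2, z], (runLengths (ι y)).length = (runLengths y).length) ∧
      ι '' yamRT κ [2, z]
        = yamRT κ [3, z - 1] \
            (yamRT κ [3, z - 1] ∩ yamPre κ ([1, 2, 3] ++ (List.range (z - 1)).map (· + 1))) := by
  have hβ : [1, 2, 3] ++ (List.range (z - 1)).map (· + 1) =
      range' 1 (2 + 1) ++ range' 1 (z - 1) := by
    rw [range'_eq_map_range (n := z - 1)]
    simp only [add_comm 1]
    rfl
  refine ⟨moveToFirstRun 2, injOn_moveToFirstRun hκ0 (by omega),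
    fun y hy => length_runLengths_moveToFirstRun hκ0 (by omega) hy, ?_⟩
  rw [Set.sdiff_self_inter, hβ, image_moveToFirstRun hκ0 le_rfl (by omega)]

/-- For `z ≥ 4`, `n ≥ z+2`, and any content `κ` with `Σᵢ κᵢ = n`, there is an injection
`ι : 𝒴_{(2,z)}(κ) → 𝒴_{(3,z−1)}(κ)` preserving the number of runs, whose image is exactly
`𝒴_{(3,z−1)}(κ) \ 𝒴_{(3,z−1)}(κ; β)` where `β = (1,2,3,1,2,…,z−1)`. -/
theorem exists_injection_yam_2z_3zsub1 (z n : ℕ) (κ : ℕ →₀ ℕ) (hz : 4 ≤ z) (hn : z + 2 ≤ n)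
    (hκ0 : κ 0 = 0) (hκ : κ.sum (fun _ m => m) = n) :
    ∃ ι : List ℕ → List ℕ,
      Set.InjOn ι (yamRT κ [2, z]) ∧
      (∀ y ∈ yamRT κ [2, z], (runLengths (ι y)).length = (runLengths y).length) ∧
      ι '' yamRT κ [2, z]
        = yamRT κ [3, z - 1] \
            (yamRT κ [3, z - 1] ∩ yamPre κ ([1, 2, 3] ++ (List.range (z - 1)).map (· + 1))) :=
  exists_injection_yam_2z_3zsub1_general z κ hz hκ0

end
end

section
/- Let n ≥ 7 and let κ be a content with Σ_i κ_i = n. Then there exists a bijection ι from 𝒴(κ; (1,2,1,2,3,3)) onto the disjoint union over all z ≥ 4 of the sets 𝒴_{(3,z)}(κ; β_z), where β_z is the word (1,2,3,1,2,…,z), such that r(ι(y)) = r(y) − 1 for every y. -/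
open scoped Classical

noncomputable section

/-!
The bijection replaces the prefix `121233` by `123123`. Both six-letter words are Yamanouchi
and are permutations of each other, so content and the Yamanouchi property are preserved.
The runs `12|123|3…` become `123|123…`: if the run of `y` starting at the last `3` has length
`c`, the image has one run fewer and its second run has length `z = c + 2`. That run of `y` has
length at least `2`, being either not the last one or the last one of length `n - 5`; hence
`z ≥ 4`. Finally, in a Yamanouchi word a letter `b` larger than every earlier letter must have
`b - 1` among them, so the increasing run continuing `1,2,3,1,2,3` reads `4,5,…,z`, which is
the prefix `β_z`.
-/

lemma runLengths_cons_ne_nil (a : ℕ) (l : List ℕ) : runLengths (a :: l) ≠ [] := by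
  cases l with
  | nil => simp [runLengths]
  | cons b l =>
    rw [runLengths]
    split
    · split <;> simp
    · simp

lemma exists_runLengths_cons_eq (a : ℕ) (l : List ℕ) :
    ∃ c cs, runLengths (a :: l) = c :: cs :=
  List.exists_cons_of_ne_nil (runLengths_cons_ne_nil a l)

lemma sum_runLengths (l : List ℕ) : (runLengths l).sum = l.length := by
  induction l with
  | nil => simp [runLengths]
  | cons a l ih =>
    cases l with
    | nil => simp [runLengths]
    | cons b l =>
      obtain ⟨c, cs, h⟩ := exists_runLengths_cons_eq b l
      rw [h] at ih
      rw [runLengths, h]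
      split_ifs <;> simp only [List.sum_cons, List.length_cons] at ih ⊢ <;> omega

lemma runLengths_eq_add_two_cons {a c : ℕ} {l cs : List ℕ}
    (h : runLengths (a :: l) = (c + 2) :: cs) :
    ∃ b l', l = b :: l' ∧ a < b ∧ runLengths (b :: l') = (c + 1) :: cs := by
  obtain _ | ⟨b, l⟩ := l
  · simp [runLengths] at h
  obtain ⟨c', cs', h'⟩ := exists_runLengths_cons_eq b l
  by_cases hab : a < b
  · simp only [runLengths, if_pos hab, h', List.cons.injEq] at h
    obtain ⟨hc, rfl⟩ := h
    exact ⟨b, l, rfl, hab, by rw [h', show c' = c + 1 by omega]⟩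
  · simp [runLengths, hab] at h


/-- The Yamanouchi clause of `MemYam`: `hy.2.1 : IsYamanouchi y` for `hy : MemYam κ y`. -/
def IsYamanouchi (y : List ℕ) : Prop :=
  ∀ m i, 1 ≤ i → (y.take m).count (i + 1) ≤ (y.take m).count i

lemma isYamanouchi_iff_forall_le_length {y : List ℕ} :
    IsYamanouchi y ↔ ∀ m ≤ y.length, ∀ a ∈ y, 2 ≤ a →
      (y.take m).count a ≤ (y.take m).count (a - 1) := by
  refine ⟨fun h m _ a _ ha => ?_, fun h m i hi => ?_⟩
  · simpa [Nat.sub_add_cancel (by omega : 1 ≤ a)] using h m (a - 1) (by omega)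
  by_cases hmem : i + 1 ∈ y
  · obtain hm | hm := le_total m y.length
    · simpa using h m hm (i + 1) hmem (by omega)
    · simpa [List.take_of_length_le hm] using h _ le_rfl (i + 1) hmem (by omega)
  · rw [List.count_eq_zero_of_not_mem fun h' => hmem (List.mem_of_mem_take h')]
    exact Nat.zero_le _

lemma IsYamanouchi.count_lt_count_pred {y p : List ℕ} {b : ℕ} (h : IsYamanouchi y)
    (hp : p ++ [b] <+: y) (hb : 2 ≤ b) : p.count b < p.count (b - 1) := by
  have := h (p ++ [b]).length (b - 1) (by omega)
  rw [← List.prefix_iff_eq_take.mp hp, Nat.sub_add_cancel (by omega : 1 ≤ b)] at this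
  simpa [List.count_append, List.count_singleton, show b ≠ b - 1 by omega] using this

lemma IsYamanouchi.append_of_perm {u v t : List ℕ} (hv : IsYamanouchi v) (huv : u.Perm v)
    (h : IsYamanouchi (u ++ t)) : IsYamanouchi (v ++ t) := by
  intro m i hi
  obtain hm | hm := le_total m v.length
  · simpa [List.take_append_of_le_length hm] using hv m i hi
  · have hlen : u.length = v.length := huv.length_eq
    have := h m i hi
    simp only [List.take_append, List.take_of_length_le hm,
      List.take_of_length_le (hlen ▸ hm : m ≥ u.length), List.count_append, hlen] at this ⊢
    simpa [huv.count_eq] using this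


def betaWord (z : ℕ) : List ℕ := [1, 2, 3] ++ (List.range z).map (· + 1)

lemma betaWord_succ (z : ℕ) : betaWord (z + 1) = betaWord z ++ [z + 1] := by
  simp [betaWord, List.range_succ]

lemma le_of_mem_betaWord {z x : ℕ} (hz : 3 ≤ z) (hx : x ∈ betaWord z) : x ≤ z := by
  simp only [betaWord, List.mem_append, List.mem_cons, List.mem_map, List.mem_range,
    List.not_mem_nil, or_false] at hx
  obtain (rfl | rfl | rfl) | ⟨a, ha, rfl⟩ := hx <;> omega

lemma betaWord_prefix_betaWord {k z : ℕ} (h : k ≤ z) : betaWord k <+: betaWord z := by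
  obtain ⟨d, rfl⟩ := Nat.exists_eq_add_of_le h
  induction d with
  | zero => exact List.prefix_refl _
  | succ d ih => exact (ih (by omega)).trans (betaWord_succ _ ▸ List.prefix_append _ _)

lemma betaWord_add_prefix_of_isYamanouchi {k c : ℕ} {t cs : List ℕ} (hk : 3 ≤ k)
    (hy : IsYamanouchi (betaWord k ++ t)) (hrun : runLengths (k :: t) = (c + 1) :: cs) :
    betaWord (k + c) <+: betaWord k ++ t := by
  induction c generalizing k t with
  | zero => exact List.prefix_append _ _
  | succ c ih =>
    obtain ⟨b, s, rfl, hkb, hrun'⟩ := runLengths_eq_add_two_cons hrun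
    have hb : b = k + 1 := by
      have hlt := hy.count_lt_count_pred (p := betaWord k) (b := b) (by simp) (by omega)
      have hb0 : (betaWord k).count b = 0 :=
        List.count_eq_zero_of_not_mem fun h => by have := le_of_mem_betaWord hk h; omega
      have hpred : b - 1 ∈ betaWord k := List.count_pos_iff.mp (by omega)
      have := le_of_mem_betaWord hk hpred
      omega
    subst hb
    have e : betaWord k ++ (k + 1) :: s = betaWord (k + 1) ++ s := by simp [betaWord_succ]
    rw [e] at hy ⊢
    rw [show k + (c + 1) = k + 1 + c by omega]
    exact ih (by omega) hy hrun'

lemma length_eq_sum_of_count_eq {y : List ℕ} {κ : ℕ →₀ ℕ} (h : ∀ i, y.count i = κ i) :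
    y.length = κ.sum (fun _ m => m) := by
  have hκ : κ = Multiset.toFinsupp (y : Multiset ℕ) := by
    ext i
    simp [Multiset.toFinsupp_apply, h]
  rw [hκ]
  exact ((Multiset.toFinsupp_sum_eq _).trans (Multiset.coe_card y)).symm

section Swap

variable {t cs : List ℕ} {c : ℕ}

lemma runLengths_121233_append (h : runLengths (3 :: t) = c :: cs) :
    runLengths ([1, 2, 1, 2, 3, 3] ++ t) = 2 :: 3 :: c :: cs := by
  simp [runLengths, h]

lemma runLengths_123123_append (h : runLengths (3 :: t) = c :: cs) :
    runLengths ([1, 2, 3, 1, 2, 3] ++ t) = 3 :: (c + 2) :: cs := by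
  simp [runLengths, h]

lemma length_runLengths_123123_append_add_one (t : List ℕ) :
    (runLengths ([1, 2, 3, 1, 2, 3] ++ t)).length + 1
      = (runLengths ([1, 2, 1, 2, 3, 3] ++ t)).length := by
  obtain ⟨c, cs, hrun⟩ := exists_runLengths_cons_eq 3 t
  rw [runLengths_121233_append hrun, runLengths_123123_append hrun]
  rfl

lemma forall_mem_dropLast_cons_congr {α : Type*} {p : α → Prop} {a b : α} (l : List α)
    (h : p a ↔ p b) : (∀ x ∈ (a :: l).dropLast, p x) ↔ ∀ x ∈ (b :: l).dropLast, p x := by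
  cases l <;> simp [List.dropLast_cons_cons, h]

lemma memYam_121233_append_iff {κ : ℕ → ℕ} (ht : t ≠ []) (hrun : runLengths (3 :: t) = c :: cs) :
    MemYam κ ([1, 2, 1, 2, 3, 3] ++ t) ↔ MemYam κ ([1, 2, 3, 1, 2, 3] ++ t) ∧ 2 ≤ c := by
  have hperm : ([1, 2, 1, 2, 3, 3] : List ℕ).Perm [1, 2, 3, 1, 2, 3] := by decide
  have hY : IsYamanouchi [1, 2, 1, 2, 3, 3] := isYamanouchi_iff_forall_le_length.mpr (by decide)
  have hY' : IsYamanouchi [1, 2, 3, 1, 2, 3] := isYamanouchi_iff_forall_le_length.mpr (by decide)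
  have hcount (i : ℕ) : ([1, 2, 1, 2, 3, 3] ++ t).count i = ([1, 2, 3, 1, 2, 3] ++ t).count i :=
    (hperm.append_right t).count_eq i
  simp only [MemYam, runLengths_121233_append hrun, runLengths_123123_append hrun, hcount,
    List.dropLast_cons_cons, List.forall_mem_cons]
  constructor
  · rintro ⟨hκ, hYt, -, -, hruns⟩
    have hc : 2 ≤ c := by
      obtain _ | ⟨d, ds⟩ := cs
      · have := sum_runLengths (3 :: t)
        rw [hrun] at this
        have := List.length_pos_iff.mpr ht
        simp only [List.sum_cons, List.sum_nil, List.length_cons] at *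
        omega
      · exact hruns c (by simp [List.dropLast_cons_cons])
    exact ⟨⟨hκ, hY'.append_of_perm hperm hYt, by omega,
      (forall_mem_dropLast_cons_congr cs (by omega)).mp hruns⟩, hc⟩
  · rintro ⟨⟨hκ, hYt, -, hruns⟩, hc⟩
    exact ⟨hκ, hY.append_of_perm hperm.symm hYt, by omega, by omega,
      (forall_mem_dropLast_cons_congr cs (by omega)).mpr hruns⟩

end Swap

lemma ne_nil_of_memYam_121233_append {κ : ℕ →₀ ℕ} {t : List ℕ}
    (hκ : 7 ≤ κ.sum (fun _ m => m)) (hy : MemYam κ ([1, 2, 1, 2, 3, 3] ++ t)) : t ≠ [] := by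
  rintro rfl
  have := length_eq_sum_of_count_eq hy.1
  simp only [List.append_nil, List.length_cons, List.length_nil] at this
  omega

lemma exists_mem_yamRT_of_memYam_121233_append {κ : ℕ → ℕ} {t : List ℕ} (ht : t ≠ [])
    (hy : MemYam κ ([1, 2, 1, 2, 3, 3] ++ t)) :
    ∃ z, 4 ≤ z ∧ [1, 2, 3, 1, 2, 3] ++ t ∈ yamRT κ [3, z] ∩ yamPre κ (betaWord z) := by
  obtain ⟨c, cs, hrun⟩ := exists_runLengths_cons_eq 3 t
  obtain ⟨hy', hc⟩ := (memYam_121233_append_iff ht hrun).mp hy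
  obtain ⟨c, rfl⟩ : ∃ c', c = c' + 1 := ⟨c - 1, by omega⟩
  refine ⟨3 + c, by omega, ⟨hy', ?_⟩, hy', betaWord_add_prefix_of_isYamanouchi le_rfl hy'.2.1 hrun⟩
  rw [runLengths_123123_append hrun]
  simp only [List.cons_prefix_cons, List.nil_prefix, true_and, and_true]
  omega

lemma exists_memYam_121233_append_of_mem_yamRT {κ : ℕ → ℕ} {z : ℕ} {y : List ℕ} (hz : 4 ≤ z)
    (hy : y ∈ yamRT κ [3, z] ∩ yamPre κ (betaWord z)) :
    ∃ t, y = [1, 2, 3, 1, 2, 3] ++ t ∧ MemYam κ ([1, 2, 1, 2, 3, 3] ++ t) := by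
  obtain ⟨⟨hy, hrt⟩, -, hβ⟩ := hy
  obtain ⟨t, rfl⟩ : [1, 2, 3, 1, 2, 3] <+: y :=
    (betaWord_prefix_betaWord (k := 3) (by omega)).trans hβ
  obtain ⟨c, cs, hrun⟩ := exists_runLengths_cons_eq 3 t
  have hzc : z = c + 2 := by
    rw [runLengths_123123_append hrun] at hrt
    simpa using hrt
  have ht : t ≠ [] := by
    rintro rfl
    simp [runLengths] at hrun
    omega
  exact ⟨t, rfl, (memYam_121233_append_iff ht hrun).mpr ⟨hy, by omega⟩⟩

theorem exists_bijection_yam_121233_general (n : ℕ) (κ : ℕ →₀ ℕ) (hn : 7 ≤ n)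
    (hκ : κ.sum (fun _ m => m) = n) :
    ∃ ι : List ℕ → List ℕ,
      Set.InjOn ι (yamPre κ [1, 2, 1, 2, 3, 3]) ∧
      (∀ y ∈ yamPre κ [1, 2, 1, 2, 3, 3],
        (runLengths (ι y)).length + 1 = (runLengths y).length) ∧
      ι '' yamPre κ [1, 2, 1, 2, 3, 3]
        = ⋃ z ∈ {z : ℕ | 4 ≤ z},
            (yamRT κ [3, z] ∩ yamPre κ ([1, 2, 3] ++ (List.range z).map (· + 1))) := by
  obtain ⟨ι, hι⟩ : ∃ ι : List ℕ → List ℕ,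
      ∀ t, ι ([1, 2, 1, 2, 3, 3] ++ t) = [1, 2, 3, 1, 2, 3] ++ t :=
    ⟨fun y => [1, 2, 3, 1, 2, 3] ++ y.drop 6, fun _ => rfl⟩
  refine ⟨ι, ?_, ?_, ?_⟩
  · rintro _ ⟨-, t₁, rfl⟩ _ ⟨-, t₂, rfl⟩ h
    rw [hι, hι] at h
    rw [List.append_cancel_left h]
  · rintro _ ⟨-, t, rfl⟩
    rw [hι, length_runLengths_123123_append_add_one]
  ext y
  simp only [Set.mem_image, Set.mem_iUnion, Set.mem_ofPred_eq, exists_prop]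
  constructor
  · rintro ⟨_, ⟨hy, t, rfl⟩, rfl⟩
    rw [hι]
    exact exists_mem_yamRT_of_memYam_121233_append
      (ne_nil_of_memYam_121233_append (hκ ▸ hn) hy) hy
  · rintro ⟨z, hz, hmem⟩
    obtain ⟨t, rfl, hy⟩ := exists_memYam_121233_append_of_mem_yamRT hz hmem
    exact ⟨_, ⟨hy, t, rfl⟩, hι t⟩

/-- For `n ≥ 7` and any content `κ` with `Σᵢ κᵢ = n`, there is a bijection `ι` from
`𝒴(κ; (1,2,1,2,3,3))` onto the (disjoint) union over `z ≥ 4` of the sets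
`𝒴_{(3,z)}(κ; β_z)`, where `β_z = (1,2,3,1,2,…,z)`, decreasing the number of runs by one. -/
theorem exists_bijection_yam_121233 (n : ℕ) (κ : ℕ →₀ ℕ) (hn : 7 ≤ n)
    (hκ0 : κ 0 = 0) (hκ : κ.sum (fun _ m => m) = n) :
    ∃ ι : List ℕ → List ℕ,
      Set.InjOn ι (yamPre κ [1, 2, 1, 2, 3, 3]) ∧
      (∀ y ∈ yamPre κ [1, 2, 1, 2, 3, 3],
        (runLengths (ι y)).length + 1 = (runLengths y).length) ∧
      ι '' yamPre κ [1, 2, 1, 2, 3, 3]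
        = ⋃ z ∈ {z : ℕ | 4 ≤ z},
            (yamRT κ [3, z] ∩ yamPre κ ([1, 2, 3] ++ (List.range z).map (· + 1))) :=
  exists_bijection_yam_121233_general n κ hn hκ

end
end
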